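/- arXiv:2112.10426 — 2 statements merged into one kernel-verified Lean document; each statement's English description precedes it below -/
import Mathlib

section
/- For every integer d ≥ 2, the domination number of the undirected Kautz graph of dimension 3 over a d-letter alphabet satisfies d(d−1)/2 ≤ γ(cDB(d,2,3)) ≤ ⌊d²/2⌋. -/
/-- A sequence `x` of length `n` over the alphabet `Fin d` is `t`-constrained if
equal symbols occur at positions at distance at least `t`. -/
def dbConstrained (d t n : ℕ) (x : Fin n → Fin d) : Prop :=
  ∀ i j : Fin n, i < j → x i = x j → t ≤ (j : ℕ) - (i : ℕ)

/-- The vertex set `V(d,t,n)` of the `t`-constrained de Bruijn graph: all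
`t`-constrained sequences of length `n` over a `d`-letter alphabet. -/
abbrev dbVtx (d t n : ℕ) : Type := {x : Fin n → Fin d // dbConstrained d t n x}

/-- `dbShift x y` holds when there is a directed de Bruijn edge from `x` to `y`,
i.e. `y` is obtained from `x` by deleting its first symbol and appending a new
last symbol. -/
def dbShift {d t n : ℕ} (x y : dbVtx d t n) : Prop :=
  ∀ (i : Fin n) (h : (i : ℕ) + 1 < n), y.val i = x.val ⟨(i : ℕ) + 1, h⟩

/-- `S` is a dominating set of the directed `t`-constrained de Bruijn graph
`cDB⁺(d,t,n)`: every vertex is dominated by (equal to, or an out-neighbor of)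
some element of `S`. -/
def dbDirDominating {d t n : ℕ} (S : Set (dbVtx d t n)) : Prop :=
  ∀ v : dbVtx d t n, ∃ s ∈ S, s = v ∨ dbShift s v

/-- The domination number `γ(cDB⁺(d,t,n))` of the directed `t`-constrained
de Bruijn graph. -/
noncomputable def gammaDir (d t n : ℕ) : ℕ :=
  sInf {k | ∃ S : Set (dbVtx d t n), S.Finite ∧ S.ncard = k ∧ dbDirDominating S}

/-- Adjacency in the undirected `t`-constrained de Bruijn graph `cDB(d,t,n)`:
edge directions are ignored and loops are removed. -/
def dbAdj {d t n : ℕ} (x y : dbVtx d t n) : Prop :=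
  x ≠ y ∧ (dbShift x y ∨ dbShift y x)

/-- `S` is a dominating set of the undirected graph `cDB(d,t,n)`: every vertex
is dominated by (equal to, or adjacent to) some element of `S`. -/
def dbUndirDominating {d t n : ℕ} (S : Set (dbVtx d t n)) : Prop :=
  ∀ v : dbVtx d t n, ∃ s ∈ S, s = v ∨ dbAdj s v

/-- The domination number `γ(cDB(d,t,n))` of the undirected `t`-constrained
de Bruijn graph. -/
noncomputable def gammaUndir (d t n : ℕ) : ℕ :=
  sInf {k | ∃ S : Set (dbVtx d t n), S.Finite ∧ S.ncard = k ∧ dbUndirDominating S}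


def mkV {d : ℕ} (a b c : Fin d) (hab : a ≠ b) (hbc : b ≠ c) : dbVtx d 2 3 :=
  ⟨![a, b, c], by
    intro i j hij heq
    fin_cases i <;> fin_cases j <;> simp_all [Fin.lt_def] <;> omega⟩

@[simp] lemma mkV_val0 {d : ℕ} (a b c : Fin d) (hab : a ≠ b) (hbc : b ≠ c) :
    (mkV a b c hab hbc).val 0 = a := rfl
@[simp] lemma mkV_val1 {d : ℕ} (a b c : Fin d) (hab : a ≠ b) (hbc : b ≠ c) :
    (mkV a b c hab hbc).val 1 = b := rfl
@[simp] lemma mkV_val2 {d : ℕ} (a b c : Fin d) (hab : a ≠ b) (hbc : b ≠ c) :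
    (mkV a b c hab hbc).val 2 = c := rfl

lemma shift_iff {d : ℕ} (s v : dbVtx d 2 3) :
    dbShift s v ↔ v.val 0 = s.val 1 ∧ v.val 1 = s.val 2 := by
  constructor
  · intro h
    exact ⟨h 0 (by decide), h 1 (by decide)⟩
  · rintro ⟨h0, h1⟩ ⟨iv, hiv⟩ hi
    simp only at hi
    interval_cases iv
    · exact h0
    · exact h1
    · omega

lemma vtx_ne01 {d : ℕ} (v : dbVtx d 2 3) : v.val 0 ≠ v.val 1 :=
  fun h => absurd (v.prop 0 1 (by decide) h) (by decide)

lemma vtx_ne12 {d : ℕ} (v : dbVtx d 2 3) : v.val 1 ≠ v.val 2 :=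
  fun h => absurd (v.prop 1 2 (by decide) h) (by decide)

lemma dom_of_prefix {d : ℕ} {S : Set (dbVtx d 2 3)} {s v : dbVtx d 2 3}
    (hs : s ∈ S) (h1 : s.val 1 = v.val 0) (h2 : s.val 2 = v.val 1) :
    ∃ s ∈ S, s = v ∨ dbAdj s v := by
  refine ⟨s, hs, Or.inr ⟨?_, Or.inl ((shift_iff s v).mpr ⟨h1.symm, h2.symm⟩)⟩⟩
  intro h
  rw [h] at h1; exact vtx_ne01 v h1.symm

lemma dom_of_suffix {d : ℕ} {S : Set (dbVtx d 2 3)} {s v : dbVtx d 2 3}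
    (hs : s ∈ S) (h0 : s.val 0 = v.val 1) (h1 : s.val 1 = v.val 2) :
    ∃ s ∈ S, s = v ∨ dbAdj s v := by
  refine ⟨s, hs, Or.inr ⟨?_, Or.inr ((shift_iff v s).mpr ⟨h0, h1⟩)⟩⟩
  intro h
  rw [h] at h0; exact vtx_ne01 v h0

lemma dominating_of_cover {d : ℕ} (S : Set (dbVtx d 2 3)) (k : ℕ)
    (h1 : ∀ y z : Fin d, (y : ℕ) < k → z ≠ y → ∃ s ∈ S, s.val 0 = y ∧ s.val 1 = z)
    (h2 : ∀ x y : Fin d, k ≤ (y : ℕ) → x ≠ y → ∃ s ∈ S, s.val 1 = x ∧ s.val 2 = y) :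
    dbUndirDominating S := by
  intro v
  by_cases h : ((v.val 1 : Fin d) : ℕ) < k
  · obtain ⟨s, hs, e0, e1⟩ := h1 (v.val 1) (v.val 2) h (Ne.symm (vtx_ne12 v))
    exact dom_of_suffix hs e0 e1
  · obtain ⟨s, hs, e1, e2⟩ := h2 (v.val 0) (v.val 1) (le_of_not_gt h) (vtx_ne01 v)
    exact dom_of_prefix hs e1 e2

def fEven (d k : ℕ) (hdk : d = 2 * k) (hk : 1 ≤ k) : Fin k × Fin d → dbVtx d 2 3 :=
  fun p =>
    if h1 : (p.2 : ℕ) = (p.1 : ℕ) then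
      mkV ⟨p.1, by have := p.1.isLt; omega⟩ ⟨p.1 + k, by have := p.1.isLt; omega⟩
        ⟨p.1, by have := p.1.isLt; omega⟩
        (by simp only [ne_eq, Fin.mk.injEq]; omega) (by simp only [ne_eq, Fin.mk.injEq]; omega)
    else if h2 : (p.2 : ℕ) = (p.1 : ℕ) + k then
      mkV ⟨p.1 + k, by have := p.1.isLt; omega⟩ ⟨p.1, by have := p.1.isLt; omega⟩
        ⟨p.1 + k, by have := p.1.isLt; omega⟩
        (by simp only [ne_eq, Fin.mk.injEq]; omega) (by simp only [ne_eq, Fin.mk.injEq]; omega)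
    else
      mkV ⟨p.1, by have := p.1.isLt; omega⟩ p.2 ⟨p.1 + k, by have := p.1.isLt; omega⟩
        (by intro h; apply h1; rw [← h]) (by intro h; apply h2; rw [h])

lemma even_case (d k : ℕ) (hd : 2 ≤ d) (hdk : d = 2 * k) :
    ∃ S : Set (dbVtx d 2 3), S.Finite ∧ S.ncard ≤ d ^ 2 / 2 ∧ dbUndirDominating S := by
  have hk : 1 ≤ k := by omega
  set f := fEven d k hdk hk with hf
  refine ⟨Set.range f, Set.finite_range f, ?_, ?_⟩
  · have h1 := Set.ncard_image_le (f := f) (s := Set.univ) Set.finite_univ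
    rw [Set.image_univ] at h1
    have h2 : (Set.univ : Set (Fin k × Fin d)).ncard = k * d := by
      simp [Set.ncard_univ, Nat.card_eq_fintype_card]
    rw [h2] at h1
    refine le_trans h1 ?_
    rw [Nat.le_div_iff_mul_le (by norm_num)]
    have : k * d * 2 = d ^ 2 := by subst hdk; ring
    exact this.le
  · apply dominating_of_cover _ k
    · -- suffix coverage: y < k
      intro y z hy hzy
      have hzy' : (z : ℕ) ≠ (y : ℕ) := fun h => hzy (Fin.ext h)
      by_cases hz : (z : ℕ) = (y : ℕ) + k
      · refine ⟨f (⟨(y : ℕ), hy⟩, y), Set.mem_range_self _, ?_, ?_⟩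
        · show (fEven d k hdk hk (⟨(y : ℕ), hy⟩, y)).val 0 = y
          rw [fEven, dif_pos (by simp)]
          simp [Fin.ext_iff]
        · show (fEven d k hdk hk (⟨(y : ℕ), hy⟩, y)).val 1 = z
          rw [fEven, dif_pos (by simp)]
          simp [Fin.ext_iff]; omega
      · refine ⟨f (⟨(y : ℕ), hy⟩, z), Set.mem_range_self _, ?_, ?_⟩
        · show (fEven d k hdk hk (⟨(y : ℕ), hy⟩, z)).val 0 = y
          rw [fEven, dif_neg (by simpa using hzy'), dif_neg (by simpa using hz)]
          simp [Fin.ext_iff]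
        · show (fEven d k hdk hk (⟨(y : ℕ), hy⟩, z)).val 1 = z
          rw [fEven, dif_neg (by simpa using hzy'), dif_neg (by simpa using hz)]
          simp
    · -- prefix coverage: y ≥ k
      intro x y hy hxy
      have hxy' : (x : ℕ) ≠ (y : ℕ) := fun h => hxy (Fin.ext h)
      have hylt : (y : ℕ) < 2 * k := by have := y.isLt; omega
      have ha : (y : ℕ) - k < k := by omega
      by_cases hx : (x : ℕ) = (y : ℕ) - k
      · refine ⟨f (⟨(y : ℕ) - k, ha⟩, y), Set.mem_range_self _, ?_, ?_⟩
        · show (fEven d k hdk hk (⟨(y : ℕ) - k, ha⟩, y)).val 1 = x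
          rw [fEven, dif_neg (by simp; omega), dif_pos (by simp; omega)]
          simp [Fin.ext_iff]; omega
        · show (fEven d k hdk hk (⟨(y : ℕ) - k, ha⟩, y)).val 2 = y
          rw [fEven, dif_neg (by simp; omega), dif_pos (by simp; omega)]
          simp [Fin.ext_iff]; omega
      · refine ⟨f (⟨(y : ℕ) - k, ha⟩, x), Set.mem_range_self _, ?_, ?_⟩
        · show (fEven d k hdk hk (⟨(y : ℕ) - k, ha⟩, x)).val 1 = x
          rw [fEven, dif_neg (by simp; omega), dif_neg (by simp; omega)]
          simp
        · show (fEven d k hdk hk (⟨(y : ℕ) - k, ha⟩, x)).val 2 = y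
          rw [fEven, dif_neg (by simp; omega), dif_neg (by simp; omega)]
          simp [Fin.ext_iff]; omega

def fOdd (d k : ℕ) (hdk : d = 2 * k + 1) (hk : 1 ≤ k) :
    Fin k × Fin d ⊕ Fin k → dbVtx d 2 3 :=
  fun q =>
    match q with
    | Sum.inr a =>
      mkV ⟨2 * k, by omega⟩ ⟨a, by have := a.isLt; omega⟩ ⟨2 * k, by omega⟩
        (by simp only [ne_eq, Fin.mk.injEq]; have := a.isLt; omega)
        (by simp only [ne_eq, Fin.mk.injEq]; have := a.isLt; omega)
    | Sum.inl p =>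
      if h1 : (p.2 : ℕ) = (p.1 : ℕ) then
        mkV ⟨2 * k, by omega⟩ ⟨p.1, by have := p.1.isLt; omega⟩
          ⟨p.1 + k, by have := p.1.isLt; omega⟩
          (by simp only [ne_eq, Fin.mk.injEq]; have := p.1.isLt; omega)
          (by simp only [ne_eq, Fin.mk.injEq]; omega)
      else if h2 : (p.2 : ℕ) = (p.1 : ℕ) + k then
        mkV ⟨p.1, by have := p.1.isLt; omega⟩ ⟨p.1 + k, by have := p.1.isLt; omega⟩
          ⟨2 * k, by omega⟩
          (by simp only [ne_eq, Fin.mk.injEq]; omega)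
          (by simp only [ne_eq, Fin.mk.injEq]; have := p.1.isLt; omega)
      else
        mkV ⟨p.1, by have := p.1.isLt; omega⟩ p.2 ⟨p.1 + k, by have := p.1.isLt; omega⟩
          (by intro h; apply h1; rw [← h]) (by intro h; apply h2; rw [h])

lemma odd_case (d k : ℕ) (hd : 2 ≤ d) (hdk : d = 2 * k + 1) :
    ∃ S : Set (dbVtx d 2 3), S.Finite ∧ S.ncard ≤ d ^ 2 / 2 ∧ dbUndirDominating S := by
  have hk : 1 ≤ k := by omega
  set f := fOdd d k hdk hk with hf
  refine ⟨Set.range f, Set.finite_range f, ?_, ?_⟩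
  · have h1 := Set.ncard_image_le (f := f) (s := Set.univ) Set.finite_univ
    rw [Set.image_univ] at h1
    have h2 : (Set.univ : Set (Fin k × Fin d ⊕ Fin k)).ncard = k * d + k := by
      simp [Set.ncard_univ, Nat.card_eq_fintype_card]
    rw [h2] at h1
    refine le_trans h1 ?_
    rw [Nat.le_div_iff_mul_le (by norm_num)]
    subst hdk
    nlinarith [sq_nonneg k]
  · apply dominating_of_cover _ k
    · -- suffix coverage: y < k
      intro y z hy hzy
      have hzy' : (z : ℕ) ≠ (y : ℕ) := fun h => hzy (Fin.ext h)
      by_cases hz : (z : ℕ) = (y : ℕ) + k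
      · refine ⟨f (Sum.inl (⟨(y : ℕ), hy⟩, z)), Set.mem_range_self _, ?_, ?_⟩
        · show (fOdd d k hdk hk (Sum.inl (⟨(y : ℕ), hy⟩, z))).val 0 = y
          rw [fOdd]
          rw [dif_neg (by simpa using hzy'), dif_pos (by simpa using hz)]
          simp [Fin.ext_iff]
        · show (fOdd d k hdk hk (Sum.inl (⟨(y : ℕ), hy⟩, z))).val 1 = z
          rw [fOdd]
          rw [dif_neg (by simpa using hzy'), dif_pos (by simpa using hz)]
          simp [Fin.ext_iff]; omega
      · refine ⟨f (Sum.inl (⟨(y : ℕ), hy⟩, z)), Set.mem_range_self _, ?_, ?_⟩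
        · show (fOdd d k hdk hk (Sum.inl (⟨(y : ℕ), hy⟩, z))).val 0 = y
          rw [fOdd]
          rw [dif_neg (by simpa using hzy'), dif_neg (by simpa using hz)]
          simp [Fin.ext_iff]
        · show (fOdd d k hdk hk (Sum.inl (⟨(y : ℕ), hy⟩, z))).val 1 = z
          rw [fOdd]
          rw [dif_neg (by simpa using hzy'), dif_neg (by simpa using hz)]
          simp
    · -- prefix coverage: y ≥ k
      intro x y hy hxy
      have hxy' : (x : ℕ) ≠ (y : ℕ) := fun h => hxy (Fin.ext h)
      have hylt : (y : ℕ) < 2 * k + 1 := by have := y.isLt; omega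
      by_cases hy2 : (y : ℕ) = 2 * k
      · -- y is the top letter 2k
        by_cases hx2 : (x : ℕ) < k
        · refine ⟨f (Sum.inr ⟨(x : ℕ), hx2⟩), Set.mem_range_self _, ?_, ?_⟩
          · show (fOdd d k hdk hk (Sum.inr ⟨(x : ℕ), hx2⟩)).val 1 = x
            rw [fOdd]; simp [Fin.ext_iff]
          · show (fOdd d k hdk hk (Sum.inr ⟨(x : ℕ), hx2⟩)).val 2 = y
            rw [fOdd]; simp [Fin.ext_iff]; omega
        · -- k ≤ x < 2k
          have hxk : (x : ℕ) - k < k := by have := x.isLt; omega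
          refine ⟨f (Sum.inl (⟨(x : ℕ) - k, hxk⟩, x)), Set.mem_range_self _, ?_, ?_⟩
          · show (fOdd d k hdk hk (Sum.inl (⟨(x : ℕ) - k, hxk⟩, x))).val 1 = x
            rw [fOdd]
            rw [dif_neg (by simp; omega), dif_pos (by simp; omega)]
            simp [Fin.ext_iff]; omega
          · show (fOdd d k hdk hk (Sum.inl (⟨(x : ℕ) - k, hxk⟩, x))).val 2 = y
            rw [fOdd]
            rw [dif_neg (by simp; omega), dif_pos (by simp; omega)]
            simp [Fin.ext_iff]; omega
      · -- k ≤ y < 2k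
        have ha : (y : ℕ) - k < k := by omega
        by_cases hx : (x : ℕ) = (y : ℕ) - k
        · refine ⟨f (Sum.inl (⟨(y : ℕ) - k, ha⟩, ⟨(y : ℕ) - k, by omega⟩)),
            Set.mem_range_self _, ?_, ?_⟩
          · show (fOdd d k hdk hk
              (Sum.inl (⟨(y : ℕ) - k, ha⟩, ⟨(y : ℕ) - k, by omega⟩))).val 1 = x
            rw [fOdd]
            rw [dif_pos (by simp)]
            simp [Fin.ext_iff]; omega
          · show (fOdd d k hdk hk
              (Sum.inl (⟨(y : ℕ) - k, ha⟩, ⟨(y : ℕ) - k, by omega⟩))).val 2 = y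
            rw [fOdd]
            rw [dif_pos (by simp)]
            simp [Fin.ext_iff]; omega
        · refine ⟨f (Sum.inl (⟨(y : ℕ) - k, ha⟩, x)), Set.mem_range_self _, ?_, ?_⟩
          · show (fOdd d k hdk hk (Sum.inl (⟨(y : ℕ) - k, ha⟩, x))).val 1 = x
            rw [fOdd]
            rw [dif_neg (by simp; omega), dif_neg (by simp; omega)]
            simp
          · show (fOdd d k hdk hk (Sum.inl (⟨(y : ℕ) - k, ha⟩, x))).val 2 = y
            rw [fOdd]
            rw [dif_neg (by simp; omega), dif_neg (by simp; omega)]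
            simp [Fin.ext_iff]; omega

lemma lower_bound {d : ℕ} (hd : 2 ≤ d) (S : Set (dbVtx d 2 3)) (hfin : S.Finite)
    (hdom : dbUndirDominating S) : d * (d - 1) ≤ 2 * S.ncard := by
  classical
  -- special vertices w_(x,y) = (y,x,y) for x ≠ y
  set junk : dbVtx d 2 3 :=
    mkV ⟨0, by omega⟩ ⟨1, by omega⟩ ⟨0, by omega⟩
      (by simp [Fin.ext_iff]) (by simp [Fin.ext_iff]) with hjunk
  set w : (p : Fin d × Fin d) → p.1 ≠ p.2 → dbVtx d 2 3 :=
    fun p h => mkV p.2 p.1 p.2 (Ne.symm h) h with hw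
  set F : Fin d × Fin d → dbVtx d 2 3 :=
    fun p => if h : p.1 ≠ p.2 then (hdom (w p h)).choose else junk with hF
  set P : Finset (Fin d × Fin d) := Finset.univ.filter (fun p => p.1 ≠ p.2) with hP
  have hmaps : ∀ p ∈ P, F p ∈ hfin.toFinset := by
    intro p hp
    have hne : p.1 ≠ p.2 := by simpa [hP] using hp
    rw [hF]
    simp only [dif_pos hne]
    exact hfin.mem_toFinset.mpr (hdom (w p hne)).choose_spec.1
  have hfiber : ∀ s ∈ hfin.toFinset, (P.filter (fun p => F p = s)).card ≤ 2 := by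
    intro s _
    have hsub : P.filter (fun p => F p = s) ⊆
        {(s.val 2, s.val 1),
         if s.val 0 = s.val 2 then (s.val 1, s.val 0) else (s.val 0, s.val 1)} := by
      intro p hp
      rw [Finset.mem_filter] at hp
      obtain ⟨hpP, hFp⟩ := hp
      have hne : p.1 ≠ p.2 := by simpa [hP] using hpP
      rw [hF] at hFp
      simp only [dif_pos hne] at hFp
      have hspec := (hdom (w p hne)).choose_spec.2
      rw [hFp] at hspec
      simp only [Finset.mem_insert, Finset.mem_singleton]
      rcases hspec with heq | ⟨_, hsh | hsh⟩
      · -- s equals w p = (p.2, p.1, p.2)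
        have e0 : s.val 0 = p.2 := by rw [heq]; rfl
        have e1 : s.val 1 = p.1 := by rw [heq]; rfl
        have e2 : s.val 2 = p.2 := by rw [heq]; rfl
        right
        rw [if_pos (e0.trans e2.symm)]
        exact Prod.ext e1.symm e0.symm
      · -- dbShift s (w p): w p = shift of s
        obtain ⟨f0, f1⟩ := (shift_iff s (w p hne)).mp hsh
        have e0 : (w p hne).val 0 = p.2 := rfl
        have e1 : (w p hne).val 1 = p.1 := rfl
        left
        rw [e0] at f0; rw [e1] at f1
        exact Prod.ext f1 f0
      · -- dbShift (w p) s
        obtain ⟨f0, f1⟩ := (shift_iff (w p hne) s).mp hsh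
        have e1 : (w p hne).val 1 = p.1 := rfl
        have e2 : (w p hne).val 2 = p.2 := rfl
        rw [e1] at f0; rw [e2] at f1
        by_cases h02 : s.val 0 = s.val 2
        · left
          exact Prod.ext (by rw [← h02]; exact f0.symm) f1.symm
        · right
          rw [if_neg h02]
          exact Prod.ext f0.symm f1.symm
    calc (P.filter (fun p => F p = s)).card
        ≤ _ := Finset.card_le_card hsub
      _ ≤ 2 := by
          refine le_trans (Finset.card_insert_le _ _) ?_
          simp
  have hkey : P.card ≤ 2 * hfin.toFinset.card :=
    Finset.card_le_mul_card_image_of_maps_to hmaps 2 hfiber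
  have hPcard : P.card = d * d - d := by
    have hsplit := Finset.card_filter_add_card_filter_not
      (s := (Finset.univ : Finset (Fin d × Fin d))) (p := fun p => p.1 = p.2)
    have hdiag : (Finset.univ.filter (fun p : Fin d × Fin d => p.1 = p.2))
        = Finset.univ.image (fun a : Fin d => (a, a)) := by
      ext ⟨a, b⟩
      simp only [Finset.mem_filter, Finset.mem_univ, true_and, Finset.mem_image,
        Prod.mk.injEq]
      constructor
      · rintro rfl; exact ⟨a, rfl, rfl⟩
      · rintro ⟨c, rfl, rfl⟩; rfl
    have hdcard : (Finset.univ.filter (fun p : Fin d × Fin d => p.1 = p.2)).card = d := by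
      rw [hdiag, Finset.card_image_of_injective _ (fun a b h => (Prod.ext_iff.mp h).1)]
      simp
    have huniv : (Finset.univ : Finset (Fin d × Fin d)).card = d * d := by
      simp
    have hPeq : (Finset.univ.filter (fun p : Fin d × Fin d => ¬ p.1 = p.2)) = P := by
      rw [hP]
    rw [hdcard, hPeq, huniv] at hsplit
    omega
  have hfc : hfin.toFinset.card = S.ncard := (Set.ncard_eq_toFinset_card S hfin).symm
  have hmul : d * (d - 1) = d * d - d := by
    obtain ⟨e, rfl⟩ : ∃ e, d = e + 1 := ⟨d - 1, by omega⟩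
    simp [Nat.add_sub_cancel, Nat.mul_sub, Nat.mul_add, Nat.add_mul]
  rw [hmul, ← hPcard, ← hfc]
  exact hkey


/-- `d(d-1)/2 ≤ γ(cDB(d,2,3)) ≤ ⌊d²/2⌋`. -/
theorem gammaUndir_kautz_three (d : ℕ) (hd : 2 ≤ d) :
    (d : ℚ) * ((d : ℚ) - 1) / 2 ≤ (gammaUndir d 2 3 : ℚ) ∧
    gammaUndir d 2 3 ≤ d ^ 2 / 2 := by
  obtain ⟨S, hfin, hcard, hdom⟩ :
      ∃ S : Set (dbVtx d 2 3), S.Finite ∧ S.ncard ≤ d ^ 2 / 2 ∧ dbUndirDominating S := by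
    rcases Nat.even_or_odd d with ⟨k, hk⟩ | ⟨k, hk⟩
    · exact even_case d k hd (by omega)
    · exact odd_case d k hd (by omega)
  have hmemset : S.ncard ∈
      {k | ∃ S' : Set (dbVtx d 2 3), S'.Finite ∧ S'.ncard = k ∧ dbUndirDominating S'} :=
    ⟨S, hfin, rfl, hdom⟩
  have hub : gammaUndir d 2 3 ≤ d ^ 2 / 2 := le_trans (Nat.sInf_le hmemset) hcard
  have hne : {k | ∃ S' : Set (dbVtx d 2 3),
      S'.Finite ∧ S'.ncard = k ∧ dbUndirDominating S'}.Nonempty := ⟨_, hmemset⟩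
  obtain ⟨S₀, hfin₀, hc₀, hdom₀⟩ := Nat.sInf_mem hne
  have hlb : d * (d - 1) ≤ 2 * gammaUndir d 2 3 := by
    have := lower_bound hd S₀ hfin₀ hdom₀
    rw [hc₀] at this
    exact this
  refine ⟨?_, hub⟩
  rw [div_le_iff₀ (by norm_num : (0 : ℚ) < 2)]
  have h1 : ((d - 1 : ℕ) : ℚ) = (d : ℚ) - 1 := Nat.cast_sub (by omega)
  have h2 : ((d * (d - 1) : ℕ) : ℚ) ≤ ((2 * gammaUndir d 2 3 : ℕ) : ℚ) :=
    Nat.cast_le.mpr hlb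
  rw [Nat.cast_mul, h1, Nat.cast_mul] at h2
  push_cast at h2 ⊢
  linarith
end

section
/- For all integers d ≥ 3 and n ≥ 4 with d odd, the domination number of the directed 3-constrained de Bruijn graph satisfies d · (d−2)^{n−2} ≤ γ(cDB⁺(d,3,n)) ≤ (d−1)² · (d−2)^{n−3}. -/
/-!
Lower bound: a vertex of `cDB⁺(d,3,n)` dominates itself and at most `d - 2` out-neighbours
(the letters that may follow its tail), while there are `d (d-1) (d-2)^(n-2)` vertices.

Upper bound: fix an involution `σ` of the alphabet and give every word `y` of length `n - 1`
with `y₀ ≠ σ y₁` one predecessor, whose first letter is `σ y₀` whenever that letter is allowed.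
A vertex `v` with `v₀ ≠ σ v₁` is dominated by the predecessor of `init v`; otherwise `v` itself
is the chosen predecessor of `tail v`. There are `d (d-1) - #{b | σ b ≠ b}` admissible pairs
`(y₀, y₁)`, which is `(d-1)^2` for `σ = Fin.rev` since `d` is odd, and each extends in
`(d-2)^(n-3)` ways.
-/

open Finset

instance (d t n : ℕ) : DecidablePred (dbConstrained d t n) := fun x => by
  unfold dbConstrained; infer_instance

instance (d t n : ℕ) (x y : dbVtx d t n) : Decidable (dbShift x y) := by
  unfold dbShift; infer_instance

section
variable {d t m n : ℕ}

theorem dbConstrained.ne {x : Fin n → Fin d} (hx : dbConstrained d t n x) {i j : Fin n}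
    (hij : i < j) (hji : (j : ℕ) < i + t) : x i ≠ x j := fun h => by
  have := hx i j hij h
  omega

theorem dbConstrained.init {x : Fin (m + 1) → Fin d} (hx : dbConstrained d t (m + 1) x) :
    dbConstrained d t m (Fin.init x) :=
  fun _ _ hij h => hx _ _ (Fin.castSucc_lt_castSucc_iff.2 hij) h

theorem dbConstrained.tail {x : Fin (m + 1) → Fin d} (hx : dbConstrained d t (m + 1) x) :
    dbConstrained d t m (Fin.tail x) := fun _ _ hij h => by
  simpa using hx _ _ (Fin.succ_lt_succ_iff.2 hij) h

theorem dbConstrained_snoc_iff {x : Fin m → Fin d} {c : Fin d} :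
    dbConstrained d t (m + 1) (Fin.snoc x c) ↔
      dbConstrained d t m x ∧ ∀ i : Fin m, m < i + t → x i ≠ c := by
  refine ⟨fun h => ⟨by simpa using h.init, fun i hi => ?_⟩, fun ⟨hx, hc⟩ => ?_⟩
  · simpa using
      h.ne (i := i.castSucc) (j := Fin.last m) (Fin.castSucc_lt_last i) (by simpa using hi)
  · intro i j hij hij'
    induction j using Fin.lastCases with
    | last =>
      induction i using Fin.lastCases with
      | last => exact absurd hij (lt_irrefl _)
      | cast i =>
        simp only [Fin.snoc_castSucc, Fin.snoc_last] at hij'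
        have := mt (hc i) (not_not.2 hij')
        simp only [Fin.val_last, Fin.val_castSucc]
        omega
    | cast j =>
      induction i using Fin.lastCases with
      | last => exact absurd hij (not_lt.2 (Fin.castSucc_lt_last j).le)
      | cast i =>
        simp only [Fin.snoc_castSucc] at hij'
        exact hx i j (Fin.castSucc_lt_castSucc_iff.1 hij) hij'

theorem dbConstrained.cons {x : Fin m → Fin d} (hx : dbConstrained d t m x) {c : Fin d}
    (hc : ∀ i : Fin m, (i : ℕ) + 1 < t → c ≠ x i) :
    dbConstrained d t (m + 1) (Fin.cons c x) := by
  intro i j hij hij'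
  induction j using Fin.cases with
  | zero => exact absurd hij (Fin.not_lt_zero _)
  | succ j =>
    induction i using Fin.cases with
    | zero =>
      simp only [Fin.cons_zero, Fin.cons_succ] at hij'
      have := mt (hc j) (not_not.2 hij')
      simp only [Fin.val_succ, Fin.val_zero]
      omega
    | succ i =>
      simp only [Fin.cons_succ] at hij'
      have := hx i j (Fin.succ_lt_succ_iff.1 hij) hij'
      simp only [Fin.val_succ]
      omega

def dbVtx.init (y : dbVtx d t (m + 1)) : dbVtx d t m := ⟨Fin.init y.1, y.2.init⟩

def dbVtx.tail (y : dbVtx d t (m + 1)) : dbVtx d t m := ⟨Fin.tail y.1, y.2.tail⟩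

theorem dbVtx.ext_of_tail {x y : dbVtx d t (m + 1)} (h0 : x.1 0 = y.1 0)
    (h : x.tail = y.tail) : x = y := by
  apply Subtype.ext
  rw [← Fin.cons_self_tail x.1, ← Fin.cons_self_tail y.1, h0]
  exact congrArg (Fin.cons _) (congrArg Subtype.val h)

theorem dbShift_iff_init_eq_tail {s v : dbVtx d t (m + 1)} : dbShift s v ↔ v.init = s.tail := by
  refine ⟨fun h => Subtype.ext (funext fun i => h i.castSucc (by simp)), fun h i hi => ?_⟩
  exact congrFun (congrArg Subtype.val h) ⟨i, by omega⟩

theorem Fin.card_filter_lt_val_add (ht : t ≤ m + 1) : #{i : Fin m | m < i + t} = t - 1 := by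
  have hcompl : #{i : Fin m | ¬ (m < i + t)} = min m (m + 1 - t) := by
    rw [← Fin.card_filter_val_lt]
    exact congrArg card (filter_congr fun i _ => by omega)
  have := card_filter_add_card_filter_not (s := (univ : Finset (Fin m))) (fun i => m < i + t)
  rw [hcompl, card_univ, Fintype.card_fin] at this
  omega

theorem card_filter_init_eq (ht : t ≤ m + 1) (x : dbVtx d t m) :
    #{y : dbVtx d t (m + 1) | y.init = x} = d - (t - 1) := by
  set W : Finset (Fin m) := {i | m < i + t}
  have hW : #(W.image x.1) = t - 1 := by
    rw [card_image_of_injOn, Fin.card_filter_lt_val_add ht]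
    intro i hi j hj hij
    simp only [W, coe_filter, mem_univ, true_and, Set.mem_ofPred_eq] at hi hj
    by_contra hne
    rcases lt_or_gt_of_ne hne with h | h
    · exact x.2.ne h (by omega) hij
    · exact x.2.ne h (by omega) hij.symm
  have hsnoc : ∀ y : dbVtx d t (m + 1), Fin.snoc y.init.1 (y.1 (Fin.last m)) = y.1 :=
    fun y => Fin.snoc_init_self y.1
  calc #{y : dbVtx d t (m + 1) | y.init = x} = #(W.image x.1)ᶜ := by
        refine card_bij (fun y _ => y.1 (Fin.last m)) (fun y hy => ?_) (fun y₁ hy₁ y₂ hy₂ h => ?_)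
          (fun c hc => ?_)
        · rw [mem_filter] at hy
          have := (hsnoc y).symm ▸ y.2
          rw [hy.2, dbConstrained_snoc_iff] at this
          simpa [W] using this.2
        · rw [mem_filter] at hy₁ hy₂
          exact Subtype.ext (by rw [← hsnoc y₁, ← hsnoc y₂, hy₁.2, hy₂.2, h])
        · have hc' : ∀ i : Fin m, m < i + t → x.1 i ≠ c := by simpa [W] using hc
          exact ⟨⟨Fin.snoc x.1 c, dbConstrained_snoc_iff.2 ⟨x.2, hc'⟩⟩,
            mem_filter.2 ⟨mem_univ _, Subtype.ext (Fin.init_snoc (α := fun _ => Fin d) _ _)⟩,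
            by simp⟩
    _ = d - (t - 1) := by rw [card_compl, Fintype.card_fin, hW]

theorem card_filter_init (ht : t ≤ m + 1) (Q : dbVtx d t m → Prop) [DecidablePred Q] :
    #{y : dbVtx d t (m + 1) | Q y.init} = #{x : dbVtx d t m | Q x} * (d - (t - 1)) := by
  rw [card_eq_sum_card_fiberwise (f := dbVtx.init) (t := {x | Q x}) fun y hy => by simpa using hy,
    ← smul_eq_mul, ← sum_const]
  refine sum_congr rfl fun x hx => ?_
  rw [filter_filter, ← card_filter_init_eq ht x]
  congr 1
  refine filter_congr fun y _ => ⟨And.right, fun h => ⟨?_, h⟩⟩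
  rw [h]
  exact (mem_filter.1 hx).2

theorem card_dominated_le (ht : t ≤ m + 1) (s : dbVtx d t (m + 1)) :
    #{v | s = v ∨ dbShift s v} ≤ d - (t - 1) + 1 :=
  calc #{v | s = v ∨ dbShift s v}
      ≤ #(insert s ({v | v.init = s.tail} : Finset (dbVtx d t (m + 1)))) := by
        refine card_le_card fun v hv => ?_
        rcases (mem_filter.1 hv).2 with rfl | h
        · exact mem_insert_self _ _
        · exact mem_insert_of_mem (mem_filter.2 ⟨mem_univ v, dbShift_iff_init_eq_tail.1 h⟩)
    _ ≤ d - (t - 1) + 1 := by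
        rw [← card_filter_init_eq ht s.tail]
        exact card_insert_le _ _

theorem card_le_ncard_mul_of_dbDirDominating (ht : t ≤ m + 1) {S : Set (dbVtx d t (m + 1))}
    (hS : dbDirDominating S) : Fintype.card (dbVtx d t (m + 1)) ≤ S.ncard * (d - (t - 1) + 1) := by
  classical
  rw [Set.ncard_eq_toFinset_card', ← card_univ]
  calc #(univ : Finset (dbVtx d t (m + 1)))
      ≤ #(S.toFinset.biUnion fun s => {v | s = v ∨ dbShift s v}) := by
        refine card_le_card fun v _ => ?_
        obtain ⟨s, hs, hsv⟩ := hS v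
        exact mem_biUnion.2 ⟨s, Set.mem_toFinset.2 hs, mem_filter.2 ⟨mem_univ _, hsv⟩⟩
    _ ≤ _ := card_biUnion_le_card_mul _ _ _ fun s _ => card_dominated_le ht s

theorem exists_dbDirDominating_ncard_eq_gammaDir (d t n : ℕ) :
    ∃ S : Set (dbVtx d t n), dbDirDominating S ∧ S.ncard = gammaDir d t n := by
  obtain ⟨S, -, hcard, hS⟩ := Nat.sInf_mem (s := {k | ∃ S : Set (dbVtx d t n), S.Finite ∧
    S.ncard = k ∧ dbDirDominating S}) ⟨_, Set.univ, Set.toFinite _, rfl,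
      fun v => ⟨v, Set.mem_univ v, Or.inl rfl⟩⟩
  exact ⟨S, hS, hcard⟩

theorem gammaDir_le_ncard {S : Set (dbVtx d t n)} (hS : dbDirDominating S) :
    gammaDir d t n ≤ S.ncard :=
  Nat.sInf_le ⟨S, S.toFinite, rfl, hS⟩

theorem card_le_gammaDir_mul (ht : t ≤ m + 1) :
    Fintype.card (dbVtx d t (m + 1)) ≤ gammaDir d t (m + 1) * (d - (t - 1) + 1) := by
  obtain ⟨S, hS, hcard⟩ := exists_dbDirDominating_ncard_eq_gammaDir d t (m + 1)
  exact hcard ▸ card_le_ncard_mul_of_dbDirDominating ht hS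

theorem card_filter_two_prefix (P : Fin d → Fin d → Prop) [DecidableRel P] : ∀ m : ℕ,
    #{y : dbVtx d 3 (m + 2) | P (y.1 0) (y.1 1)} =
      #{p : Fin d × Fin d | p.1 ≠ p.2 ∧ P p.1 p.2} * (d - 2) ^ m
  | 0 => by
    rw [pow_zero, mul_one]
    refine card_bij (fun y _ => (y.1 0, y.1 1)) (fun y hy => ?_) (fun y₁ _ y₂ _ h => ?_)
      (fun p hp => ?_)
    · exact mem_filter.2 ⟨mem_univ _, y.2.ne (by simp) (by simp), (mem_filter.1 hy).2⟩
    · exact Subtype.ext (funext (Fin.forall_fin_two.2 (Prod.ext_iff.1 h)))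
    · obtain ⟨hne, hP⟩ := (mem_filter.1 hp).2
      have hx : dbConstrained d 3 2 ![p.1, p.2] := by
        intro i j hij h
        fin_cases i <;> fin_cases j <;> simp_all
      exact ⟨⟨![p.1, p.2], hx⟩, mem_filter.2 ⟨mem_univ _, hP⟩, rfl⟩
  | m + 1 => by
    rw [pow_succ, ← mul_assoc, ← card_filter_two_prefix P m, ← card_filter_init (by omega)]
    rfl

theorem card_dbVtx_three (m : ℕ) :
    Fintype.card (dbVtx d 3 (m + 2)) = d * (d - 1) * (d - 2) ^ m := by
  have h := card_filter_two_prefix (d := d) (fun _ _ => True) m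
  have hoff : ({p | p.1 ≠ p.2 ∧ True} : Finset (Fin d × Fin d)) = univ.offDiag := by
    ext; simp
  rw [filter_true, card_univ, hoff, offDiag_card, card_univ, Fintype.card_fin] at h
  rw [h, Nat.mul_sub_one]

theorem le_gammaDir_three (hd : 2 ≤ d) (m : ℕ) :
    d * (d - 2) ^ (m + 1) ≤ gammaDir d 3 (m + 3) := by
  have h := (card_dbVtx_three (m + 1)).symm.trans_le
    (card_le_gammaDir_mul (d := d) (t := 3) (m := m + 2) (by omega))
  rw [show d - (3 - 1) + 1 = d - 1 by omega, mul_right_comm] at h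
  exact Nat.le_of_mul_le_mul_right h (by omega)

theorem exists_ne_and_ne_of_three_le_card {α : Type*} [Fintype α] (h3 : 3 ≤ Fintype.card α)
    (a b : α) : ∃ c, c ≠ a ∧ c ≠ b := by
  classical
  by_contra! h
  have : (univ : Finset α) ⊆ {a, b} := fun c _ =>
    mem_insert.2 ((em (c = a)).imp_right fun hc => mem_singleton.2 (h c hc))
  have := (card_le_card this).trans card_le_two
  simp at this
  omega

theorem exists_tail_eq (hd : 3 ≤ d) (y : dbVtx d 3 (m + 2)) (c : Fin d) :
    ∃ x : dbVtx d 3 (m + 3), x.tail = y ∧ (c ≠ y.1 0 → c ≠ y.1 1 → x.1 0 = c) := by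
  have hcons : ∀ c, c ≠ y.1 0 → c ≠ y.1 1 →
      ∃ x : dbVtx d 3 (m + 3), x.tail = y ∧ x.1 0 = c := by
    intro c h0 h1
    refine ⟨⟨Fin.cons c y.1, y.2.cons fun i hi => ?_⟩,
      Subtype.ext (Fin.tail_cons (α := fun _ => Fin d) c y.1), rfl⟩
    obtain rfl | rfl : i = 0 ∨ i = 1 := by
      simp only [Fin.ext_iff, Fin.val_zero, Fin.val_one]
      omega
    exacts [h0, h1]
  by_cases hc : c ≠ y.1 0 ∧ c ≠ y.1 1
  · obtain ⟨x, hx, hx0⟩ := hcons c hc.1 hc.2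
    exact ⟨x, hx, fun _ _ => hx0⟩
  · obtain ⟨c', h0, h1⟩ := exists_ne_and_ne_of_three_le_card (by simpa using hd) (y.1 0) (y.1 1)
    obtain ⟨x, hx, -⟩ := hcons c' h0 h1
    exact ⟨x, hx, fun h0 h1 => absurd ⟨h0, h1⟩ hc⟩

theorem dbDirDominating_image {σ : Fin d → Fin d} (hσ : Function.Involutive σ)
    (pred : dbVtx d 3 (m + 2) → dbVtx d 3 (m + 3)) (hpred_tail : ∀ y, (pred y).tail = y)
    (hpred_head : ∀ y, σ (y.1 0) ≠ y.1 0 → σ (y.1 0) ≠ y.1 1 → (pred y).1 0 = σ (y.1 0)) :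
    dbDirDominating (pred '' {y | y.1 0 ≠ σ (y.1 1)}) := by
  intro v
  by_cases hv : v.1 0 = σ (v.1 1)
  · have h01 : v.1 0 ≠ v.1 1 := v.2.ne (by simp) (by simp)
    have h02 : v.1 0 ≠ v.1 ⟨2, by omega⟩ := v.2.ne (by simp [Fin.lt_def]) (by simp)
    have htail0 : v.tail.1 0 = v.1 1 := rfl
    have htail1 : v.tail.1 1 = v.1 ⟨2, by omega⟩ := rfl
    refine ⟨pred v.tail, ⟨v.tail, fun h => h02 ?_, rfl⟩,
      Or.inl (dbVtx.ext_of_tail ?_ (hpred_tail _))⟩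
    · rw [hv, ← htail0, h, hσ, htail1]
    · rw [hpred_head _ (by rw [htail0, ← hv]; exact h01) (by rwa [htail0, htail1, ← hv]),
        htail0, hv]
  · exact ⟨pred v.init, ⟨v.init, hv, rfl⟩,
      Or.inr (dbShift_iff_init_eq_tail.2 (hpred_tail _).symm)⟩

theorem gammaDir_three_le (hd : 3 ≤ d) {σ : Fin d → Fin d} (hσ : Function.Involutive σ)
    (m : ℕ) :
    gammaDir d 3 (m + 3) ≤ #{p : Fin d × Fin d | p.1 ≠ p.2 ∧ p.1 ≠ σ p.2} * (d - 2) ^ m := by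
  choose pred hpred_tail hpred_head using
    fun y : dbVtx d 3 (m + 2) => exists_tail_eq hd y (σ (y.1 0))
  calc gammaDir d 3 (m + 3) ≤ (pred '' {y | y.1 0 ≠ σ (y.1 1)}).ncard :=
        gammaDir_le_ncard (dbDirDominating_image hσ pred hpred_tail hpred_head)
    _ ≤ {y : dbVtx d 3 (m + 2) | y.1 0 ≠ σ (y.1 1)}.ncard :=
        Set.ncard_image_le (Set.toFinite _)
    _ = #{y : dbVtx d 3 (m + 2) | y.1 0 ≠ σ (y.1 1)} := by
        rw [Set.ncard_eq_toFinset_card', Set.toFinset_ofPred]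
    _ = _ := card_filter_two_prefix (fun a b => a ≠ σ b) m

end

theorem card_ne_and_ne_add_card_ne {α : Type*} [Fintype α] [DecidableEq α] (σ : α → α) :
    #{p : α × α | p.1 ≠ p.2 ∧ p.1 ≠ σ p.2} + #{b | σ b ≠ b} =
      Fintype.card α * (Fintype.card α - 1) := by
  rw [← card_univ, Nat.mul_sub_one, ← offDiag_card,
    ← card_filter_add_card_filter_not (s := univ.offDiag) (fun p => p.1 ≠ σ p.2)]
  congr 1
  · congr 1
    ext p
    simp [mem_offDiag]
  · symm
    refine card_nbij' Prod.snd (fun b => (σ b, b)) (fun p hp => ?_) (fun b hb => ?_)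
      (fun p hp => ?_) (fun b _ => rfl)
    · simp only [coe_filter, mem_offDiag, mem_univ, true_and, not_not, Set.mem_ofPred_eq] at hp ⊢
      exact hp.2 ▸ hp.1
    · simp_all
    · simp only [coe_filter, mem_offDiag, mem_univ, true_and, not_not, Set.mem_ofPred_eq] at hp
      exact Prod.ext hp.2.symm rfl

theorem Fin.card_filter_rev_ne {d : ℕ} (hodd : Odd d) : #{b : Fin d | b.rev ≠ b} = d - 1 := by
  obtain ⟨k, rfl⟩ := hodd
  have hfix : ({b | b.rev = b} : Finset (Fin (2 * k + 1))) = {⟨k, by omega⟩} := by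
    ext b
    simp only [mem_filter, mem_univ, true_and, mem_singleton, Fin.ext_iff, Fin.val_rev]
    omega
  have h := card_filter_add_card_filter_not (s := univ) (fun b : Fin (2 * k + 1) => b.rev = b)
  rw [hfix, card_singleton, card_univ, Fintype.card_fin] at h
  simp only [ne_eq]
  omega

theorem card_ne_and_ne_rev {d : ℕ} (hodd : Odd d) :
    #{p : Fin d × Fin d | p.1 ≠ p.2 ∧ p.1 ≠ p.2.rev} = (d - 1) ^ 2 := by
  have h := card_ne_and_ne_add_card_ne (Fin.rev (n := d))
  rw [Fin.card_filter_rev_ne hodd, Fintype.card_fin] at h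
  obtain ⟨e, rfl⟩ : ∃ e, d = e + 1 := ⟨d - 1, by have := hodd.pos; omega⟩
  simp only [Nat.add_sub_cancel] at h ⊢
  nlinarith

/-- for `d` odd,
`d * (d-2)^(n-2) ≤ γ(cDB⁺(d,3,n)) ≤ (d-1)^2 * (d-2)^(n-3)`. -/
theorem gammaDir_three_odd (d n : ℕ) (hd : 3 ≤ d) (hn : 4 ≤ n) (hodd : Odd d) :
    d * (d - 2) ^ (n - 2) ≤ gammaDir d 3 n ∧
    gammaDir d 3 n ≤ (d - 1) ^ 2 * (d - 2) ^ (n - 3) := by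
  obtain ⟨m, rfl⟩ : ∃ m, n = m + 3 := ⟨n - 3, by omega⟩
  refine ⟨le_gammaDir_three (by omega) m, ?_⟩
  rw [← card_ne_and_ne_rev hodd]
  exact gammaDir_three_le hd Fin.rev_involutive m
end
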